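/- arXiv:math/0610595 — 5 statements merged into one kernel-verified Lean document; each statement's English description precedes it below -/
import Mathlib

section
/- For every n ≥ 1, every subgroup of DihedralGroup n is either a cyclic group or is isomorphic to DihedralGroup m for some divisor m of n. -/
/-!
Let `R ⊆ ZMod n` be the set of indices of the rotations lying in a subgroup `H`. If `H` contains no
reflection, it lies in the cyclic subgroup generated by `r 1`. Otherwise pick a reflection `sr j ∈ H`;
then `sr i ∈ H ↔ i - j ∈ R`. The additive subgroup `R` is cyclic, so `R ≅ ZMod m` with `m ∣ n`, and
`r i ↦ r (φ i)`, `sr i ↦ sr (j + φ i)` (with `φ : ZMod m ≃+ R`) embeds `DihedralGroup m` onto `H`.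
Here `m = Nat.card R`, which is `0` when `R` is infinite (`n = 0`), matching `ZMod 0 = ℤ`.
-/

open Function

theorem ZMod.exists_injective_addMonoidHom_range_eq {n : ℕ} (R : AddSubgroup (ZMod n)) :
    ∃ m, m ∣ n ∧ ∃ φ : ZMod m →+ ZMod n, Injective φ ∧ φ.range = R := by
  refine ⟨Nat.card R, ?_, R.subtype.comp (zmodAddCyclicAddEquiv inferInstance).toAddMonoidHom,
    R.subtype_injective.comp (AddEquiv.injective _), ?_⟩
  · simpa only [Nat.card_zmod] using R.card_addSubgroup_dvd_card
  · rw [AddMonoidHom.range_comp, AddMonoidHom.range_eq_top.mpr (AddEquiv.surjective _),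
      ← AddMonoidHom.range_eq_map, AddSubgroup.range_subtype]

namespace DihedralGroup

variable {m n : ℕ}

def rotationIndices (H : Subgroup (DihedralGroup n)) : AddSubgroup (ZMod n) where
  carrier := {i | r i ∈ H}
  zero_mem' := H.one_mem
  add_mem' {a b} ha hb := show r (a + b) ∈ H from r_mul_r a b ▸ H.mul_mem ha hb
  neg_mem' {a} ha := show r (-a) ∈ H from inv_r a ▸ H.inv_mem ha

@[simp]
theorem mem_rotationIndices {H : Subgroup (DihedralGroup n)} {i : ZMod n} :
    i ∈ rotationIndices H ↔ r i ∈ H :=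
  Iff.rfl

theorem sr_mem_iff {H : Subgroup (DihedralGroup n)} {i j : ZMod n} (hj : sr j ∈ H) :
    sr i ∈ H ↔ r (i - j) ∈ H := by
  rw [← sr_mul_sr, Subgroup.mul_mem_cancel_left H hj]

theorem r_mem_zpowers_r_one (i : ZMod n) : r i ∈ Subgroup.zpowers (r 1) :=
  ⟨ZMod.cast i, by simp only [r_one_zpow, ZMod.intCast_zmod_cast]⟩

theorem le_zpowers_r_one {H : Subgroup (DihedralGroup n)} (hH : ∀ i, sr i ∉ H) :
    H ≤ Subgroup.zpowers (r 1) := by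
  rintro (i | i) hi
  · exact r_mem_zpowers_r_one i
  · exact absurd hi (hH i)

def map (φ : ZMod m →+ ZMod n) (j : ZMod n) : DihedralGroup m →* DihedralGroup n where
  toFun
    | r i => r (φ i)
    | sr i => sr (j + φ i)
  map_one' := by simp only [one_def, map_zero]
  map_mul' := by
    rintro (a | a) (b | b) <;>
      simp only [r_mul_r, r_mul_sr, sr_mul_r, sr_mul_sr, map_add, map_sub] <;> congr 1 <;> abel

section

variable (φ : ZMod m →+ ZMod n) (j : ZMod n)

@[simp]
theorem map_r (i : ZMod m) : map φ j (r i) = r (φ i) :=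
  rfl

@[simp]
theorem map_sr (i : ZMod m) : map φ j (sr i) = sr (j + φ i) :=
  rfl

theorem r_mem_range_map {i : ZMod n} : r i ∈ (map φ j).range ↔ i ∈ φ.range := by
  constructor
  · rintro ⟨a | a, h⟩ <;> simp only [map_r, map_sr, r.injEq, reduceCtorEq] at h
    exact ⟨a, h⟩
  · rintro ⟨a, rfl⟩
    exact ⟨r a, rfl⟩

theorem sr_mem_range_map {i : ZMod n} : sr i ∈ (map φ j).range ↔ i - j ∈ φ.range := by
  constructor
  · rintro ⟨a | a, h⟩ <;> simp only [map_r, map_sr, sr.injEq, reduceCtorEq] at h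
    exact ⟨a, by rw [← h, add_sub_cancel_left]⟩
  · rintro ⟨a, ha⟩
    exact ⟨sr a, by rw [map_sr, ha, add_sub_cancel]⟩

end

theorem map_injective {φ : ZMod m →+ ZMod n} (hφ : Injective φ) (j : ZMod n) :
    Injective (map φ j) := by
  rintro (a | a) (b | b) h <;> simp only [map_r, map_sr, r.injEq, sr.injEq, reduceCtorEq] at h
  · rw [hφ h]
  · rw [hφ (add_left_cancel h)]

theorem range_map_eq (φ : ZMod m →+ ZMod n) {H : Subgroup (DihedralGroup n)} {j : ZMod n}
    (hj : sr j ∈ H) (hφ : φ.range = rotationIndices H) : (map φ j).range = H := by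
  ext (i | i)
  · rw [r_mem_range_map, hφ, mem_rotationIndices]
  · rw [sr_mem_range_map, hφ, mem_rotationIndices, sr_mem_iff hj]

end DihedralGroup

open DihedralGroup in
theorem subgroup_dihedralGroup_isCyclic_or_dihedral_general (n : ℕ)
    (H : Subgroup (DihedralGroup n)) :
    IsCyclic H ∨ ∃ m : ℕ, m ∣ n ∧ Nonempty (H ≃* DihedralGroup m) := by
  by_cases hs : ∃ j, sr j ∈ H
  · obtain ⟨j, hj⟩ := hs
    obtain ⟨m, hmn, φ, hφ, hrange⟩ :=
      ZMod.exists_injective_addMonoidHom_range_eq (rotationIndices H)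
    refine Or.inr ⟨m, hmn, ⟨?_⟩⟩
    exact (MulEquiv.subgroupCongr (range_map_eq φ hj hrange).symm).trans
      (MonoidHom.ofInjective (map_injective hφ j)).symm
  · push Not at hs
    exact Or.inl (Subgroup.isCyclic_of_le (le_zpowers_r_one hs))

/-- Every subgroup of the dihedral group `DihedralGroup n` (of order `2n`, `n ≥ 1`) is either
cyclic or isomorphic to a dihedral group `DihedralGroup m` for some divisor `m` of `n`. -/
theorem subgroup_dihedralGroup_isCyclic_or_dihedral (n : ℕ) (hn : 1 ≤ n)
    (H : Subgroup (DihedralGroup n)) :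
    IsCyclic H ∨ ∃ m : ℕ, m ∣ n ∧ Nonempty (H ≃* DihedralGroup m) :=
  subgroup_dihedralGroup_isCyclic_or_dihedral_general n H
end

section
/- For every n ≥ 1: if n is odd then H²(QuaternionGroup n, ℤ/2ℤ) is isomorphic to ℤ/2ℤ, and if n is even then H²(QuaternionGroup n, ℤ/2ℤ) is isomorphic to (ℤ/2ℤ)². -/
/-!
`H²(G, 𝔽₂)` classifies central extensions `𝔽₂ → E → G`, and a cocycle is a coboundary exactly
when its extension `E` splits. Write `Q_{4n} = ⟨a, x ∣ x² = aⁿ, a x a = x⟩`. In the extension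
classified by a cocycle `f`, the lifts `(0, a)`, `(0, x)` satisfy the two relations up to central
defects `β f` and `γ f`, which are linear in `f`; if lifts satisfying the relations exist, they
define a splitting. Multiplying the lift of `a` by a central `z` changes `β` by `n z` and `γ` by
`2 z = 0`. Hence for odd `n` the class of `f` is detected by `γ` alone, and for even `n` by
`(β, γ)`. These invariants are onto: for odd `n` pull back the cocycle of `ℤ/8` along the
abelianization `Q_{4n} → ℤ/4`; for even `n` take cup products of the two characters
`Q_{4n} → 𝔽₂`.
-/

/-- `H²(G, ℤ/pℤ)`: degree-2 group cohomology of `G` with coefficients in `ℤ/pℤ` regarded as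
a trivial `G`-module. -/
noncomputable abbrev H2mod (G : Type) [Group G] (p : ℕ) : Type :=
  groupCohomology (Rep.trivial (ZMod p) G (ZMod p)) 2

universe u

namespace groupCohomology

section TrivialCoefficients

variable {k G : Type u} [CommRing k] [Group G]

lemma mem_cocycles₂_trivial_iff (f : G × G → k) :
    f ∈ cocycles₂ (Rep.trivial k G k) ↔
      ∀ g h j : G, f (g * h, j) + f (g, h) = f (h, j) + f (g, h * j) := by
  simp [mem_cocycles₂_iff]

lemma mem_coboundaries₂_trivial_iff (f : G × G → k) :
    f ∈ coboundaries₂ (Rep.trivial k G k) ↔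
      ∃ φ : G → k, ∀ g h : G, φ h - φ (g * h) + φ g = f (g, h) := by
  simp [coboundaries₂, funext_iff, Prod.forall]

lemma cup_mem_cocycles₂ {u v : G → k} (hu : ∀ g h, u (g * h) = u g + u h)
    (hv : ∀ g h, v (g * h) = v g + v h) :
    (fun p : G × G => u p.1 * v p.2) ∈ cocycles₂ (Rep.trivial k G k) :=
  (mem_cocycles₂_trivial_iff _).2 fun g h j => by simp only [hu, hv]; ring

variable (f : cocycles₂ (Rep.trivial k G k))

lemma cocycles₂_trivial_cocycle (g h j : G) :
    f (g * h, j) + f (g, h) = f (h, j) + f (g, h * j) :=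
  (mem_cocycles₂_trivial_iff (f : G × G → k)).1 f.2 g h j

lemma cocycles₂_trivial_map_one_fst (g : G) : f (1, g) = f (1, 1) := by
  simpa using (cocycles₂_trivial_cocycle f 1 1 g).symm

lemma cocycles₂_trivial_map_one_snd (g : G) : f (g, 1) = f (1, 1) := by
  simpa using cocycles₂_trivial_cocycle f g 1 1

lemma cocycles₂_trivial_map_inv_self (g : G) : f (g⁻¹, g) = f (g, g⁻¹) := by
  have h := cocycles₂_trivial_cocycle f g g⁻¹ g
  rw [mul_inv_cancel, inv_mul_cancel, cocycles₂_trivial_map_one_fst f g,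
    cocycles₂_trivial_map_one_snd f g] at h
  linear_combination -h

/-- The central extension of `G` by `k` classified by `f`: the set `k × G` with the product
`(s, g) * (t, h) = (s + t + f (g, h), g * h)`. -/
@[ext]
structure CocycleExtension (f : cocycles₂ (Rep.trivial k G k)) where
  fst : k
  snd : G

namespace CocycleExtension

variable {f}

instance : Group (CocycleExtension f) where
  mul e e' := ⟨e.fst + e'.fst + f (e.snd, e'.snd), e.snd * e'.snd⟩
  one := ⟨-f (1, 1), 1⟩
  inv e := ⟨-e.fst - f (e.snd, e.snd⁻¹) - f (1, 1), e.snd⁻¹⟩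
  mul_assoc e₁ e₂ e₃ := by
    ext
    · change e₁.fst + e₂.fst + f (e₁.snd, e₂.snd) + e₃.fst + f (e₁.snd * e₂.snd, e₃.snd) =
        e₁.fst + (e₂.fst + e₃.fst + f (e₂.snd, e₃.snd)) + f (e₁.snd, e₂.snd * e₃.snd)
      linear_combination cocycles₂_trivial_cocycle f e₁.snd e₂.snd e₃.snd
    · exact mul_assoc e₁.snd e₂.snd e₃.snd
  one_mul e := by
    ext
    · change -f (1, 1) + e.fst + f (1, e.snd) = e.fst
      rw [cocycles₂_trivial_map_one_fst f e.snd]; ring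
    · exact one_mul e.snd
  mul_one e := by
    ext
    · change e.fst + -f (1, 1) + f (e.snd, 1) = e.fst
      rw [cocycles₂_trivial_map_one_snd f e.snd]; ring
    · exact mul_one e.snd
  inv_mul_cancel e := by
    ext
    · change -e.fst - f (e.snd, e.snd⁻¹) - f (1, 1) + e.fst + f (e.snd⁻¹, e.snd) = -f (1, 1)
      rw [cocycles₂_trivial_map_inv_self f e.snd]; ring
    · exact inv_mul_cancel e.snd

@[simp] lemma mul_fst (e e' : CocycleExtension f) :
    (e * e').fst = e.fst + e'.fst + f (e.snd, e'.snd) := rfl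

@[simp] lemma mul_snd (e e' : CocycleExtension f) : (e * e').snd = e.snd * e'.snd := rfl

@[simp] lemma one_fst : (1 : CocycleExtension f).fst = -f (1, 1) := rfl

@[simp] lemma one_snd : (1 : CocycleExtension f).snd = 1 := rfl

variable (f) in
def proj : CocycleExtension f →* G where
  toFun := snd
  map_one' := rfl
  map_mul' _ _ := rfl

variable (f) in
def inl : Multiplicative k →* CocycleExtension f where
  toFun t := ⟨t.toAdd - f (1, 1), 1⟩
  map_one' := by ext <;> simp
  map_mul' s t := by
    ext
    · simp [cocycles₂_trivial_map_one_fst]; ring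
    · simp

lemma inl_mul (t : k) (e : CocycleExtension f) : inl f (.ofAdd t) * e = ⟨t + e.fst, e.snd⟩ := by
  ext
  · simp [inl, cocycles₂_trivial_map_one_fst]; ring
  · simp [inl]

lemma commute_inl (t : k) (e : CocycleExtension f) : Commute (inl f (.ofAdd t)) e := by
  ext
  · simp [inl, cocycles₂_trivial_map_one_fst, cocycles₂_trivial_map_one_snd]; ring
  · simp [inl]

lemma mk_zero_pow (g : G) (m : ℕ) :
    (⟨0, g⟩ : CocycleExtension f) ^ m =
      ⟨∑ j ∈ Finset.range m, f (g, g ^ j) - f (1, 1), g ^ m⟩ := by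
  induction m with
  | zero => ext <;> simp
  | succ m ih =>
    rw [pow_succ', ih]
    ext
    · simp [Finset.sum_range_succ]; ring
    · simp [pow_succ']

end CocycleExtension

open CocycleExtension in
lemma mem_coboundaries₂_of_section (s : G →* CocycleExtension f)
    (hs : (proj f).comp s = MonoidHom.id G) :
    ⇑f ∈ coboundaries₂ (Rep.trivial k G k) := by
  have hsnd (g : G) : (s g).snd = g := DFunLike.congr_fun hs g
  refine (mem_coboundaries₂_trivial_iff _).2 ⟨fun g => -(s g).fst, fun g h => ?_⟩
  have hmul := congrArg CocycleExtension.fst (map_mul s g h)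
  rw [mul_fst, hsnd, hsnd] at hmul
  linear_combination hmul

end TrivialCoefficients

variable {k G : Type u} [CommRing k] [Group G] {A : Rep k G} {W : Type*} [AddCommGroup W]
  [Module k W]

noncomputable def H2EquivOfSurjective (L : cocycles₂ A →ₗ[k] W) (hL : Function.Surjective L)
    (hker : ∀ x, L x = 0 ↔ ⇑x ∈ coboundaries₂ A) : H2 A ≃ₗ[k] W :=
  ((H2π A).hom.quotKerEquivOfSurjective ((ModuleCat.epi_iff_surjective _).1 inferInstance)).symm ≪≫ₗ
    Submodule.quotEquivOfEq _ _ (by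
      ext x
      rw [LinearMap.mem_ker, LinearMap.mem_ker, hker]
      exact H2π_eq_zero_iff x) ≪≫ₗ
    L.quotKerEquivOfSurjective hL

end groupCohomology

/-- The carry digit of the sum of two base-`4` digits: the 2-cocycle of the extension
`ZMod 2 → ZMod 8 → ZMod 4`. -/
def carry (u v : ZMod 4) : ZMod 2 := if 4 ≤ u.val + v.val then 1 else 0

open groupCohomology in
lemma carry_comp_mem_cocycles₂ {G : Type} [Group G] {ψ : G → ZMod 4}
    (hψ : ∀ g h, ψ (g * h) = ψ g + ψ h) :
    (fun p : G × G => carry (ψ p.1) (ψ p.2)) ∈ cocycles₂ (Rep.trivial (ZMod 2) G (ZMod 2)) := by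
  have hcarry : ∀ u v w : ZMod 4, carry (u + v) w + carry u v = carry v w + carry u (v + w) := by
    decide
  exact (mem_cocycles₂_trivial_iff _).2 fun g h j => by simp only [hψ]; exact hcarry _ _ _

lemma zpow_cast_of_intCast_eq {H : Type*} [Group H] {x : H} {m : ℕ} (hx : x ^ m = 1) {t : ℤ}
    {i : ZMod m} (h : (t : ZMod m) = i) : x ^ (i.cast : ℤ) = x ^ t := by
  rw [zpow_eq_zpow_iff_modEq]
  refine Int.ModEq.of_dvd (Int.natCast_dvd_natCast.2 (orderOf_dvd_of_pow_eq_one hx)) ?_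
  rw [← ZMod.intCast_eq_intCast_iff, ZMod.intCast_zmod_cast, h]

section Relations

variable {H : Type*} [Group H] {A X : H}

lemma zpow_mul_eq_mul_zpow_neg (hAXA : A * X * A = X) (t : ℤ) : A ^ t * X = X * A ^ (-t) := by
  have h : SemiconjBy X A⁻¹ A := by
    rw [SemiconjBy, mul_inv_eq_iff_eq_mul, hAXA]
  rw [zpow_neg, ← inv_zpow, (h.zpow_right t).eq]

lemma pow_two_mul_eq_one {n : ℕ} (hXX : X * X = A ^ n) (hAXA : A * X * A = X) :
    A ^ (2 * n) = 1 := by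
  have h := zpow_mul_eq_mul_zpow_neg hAXA n
  rw [zpow_natCast, ← hXX, mul_assoc, hXX, mul_right_inj, zpow_neg, zpow_natCast,
    eq_inv_iff_mul_eq_one] at h
  rw [two_mul, pow_add, h]

end Relations

namespace QuaternionGroup

open groupCohomology

variable {n : ℕ}

lemma a_one_zpow (t : ℤ) : (a 1 : QuaternionGroup n) ^ t = a t := by
  induction t using Int.induction_on with
  | zero => rw [zpow_zero, Int.cast_zero, a_zero]
  | succ t ih => rw [zpow_add_one, ih, a_mul_a]; push_cast; rfl
  | pred t ih =>
    rw [zpow_sub_one, ih]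
    refine (eq_mul_inv_of_mul_eq ?_).symm
    rw [a_mul_a]; push_cast; ring_nf

section Lift

variable {H : Type*} [Group H] (A X : H)

/-- The homomorphism with `a 1 ↦ A` and `xa 0 ↦ X`, from the presentation
`⟨a, x ∣ x² = aⁿ, a x a = x⟩` of `QuaternionGroup n`. -/
def lift (hXX : X * X = A ^ n) (hAXA : A * X * A = X) : QuaternionGroup n →* H where
  toFun
    | a i => A ^ (i.cast : ℤ)
    | xa i => X * A ^ (i.cast : ℤ)
  map_one' := by
    change A ^ ((0 : ZMod (2 * n)).cast : ℤ) = 1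
    simp
  map_mul' := by
    have hA := pow_two_mul_eq_one hXX hAXA
    rintro (i | i) (j | j) <;> simp only [a_mul_a, a_mul_xa, xa_mul_a, xa_mul_xa]
    · rw [← zpow_add]
      exact zpow_cast_of_intCast_eq hA (by push_cast [ZMod.intCast_zmod_cast]; rfl)
    · rw [← mul_assoc, zpow_mul_eq_mul_zpow_neg hAXA, mul_assoc, ← zpow_add]
      exact congrArg (X * ·) <|
        zpow_cast_of_intCast_eq hA (by push_cast [ZMod.intCast_zmod_cast]; ring)
    · rw [mul_assoc, ← zpow_add]
      exact congrArg (X * ·) <|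
        zpow_cast_of_intCast_eq hA (by push_cast [ZMod.intCast_zmod_cast]; rfl)
    · rw [mul_assoc, ← mul_assoc (A ^ _), zpow_mul_eq_mul_zpow_neg hAXA, mul_assoc, ← mul_assoc,
        hXX, ← zpow_natCast, ← zpow_add, ← zpow_add]
      exact zpow_cast_of_intCast_eq hA (by push_cast [ZMod.intCast_zmod_cast]; ring)

lemma comp_lift_eq_id {hXX : X * X = A ^ n} {hAXA : A * X * A = X}
    (φ : H →* QuaternionGroup n) (hA : φ A = a 1) (hX : φ X = xa 0) :
    φ.comp (lift A X hXX hAXA) = MonoidHom.id _ := by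
  ext (i | i) <;> simp [lift, map_zpow, hA, hX, a_one_zpow, xa_mul_a]

end Lift

open CocycleExtension

lemma mem_coboundaries₂_of_relations {k : Type} [CommRing k]
    (f : cocycles₂ (Rep.trivial k (QuaternionGroup n) k)) (A X : CocycleExtension f)
    (hA : A.snd = a 1) (hX : X.snd = xa 0) (hXX : X * X = A ^ n) (hAXA : A * X * A = X) :
    ⇑f ∈ coboundaries₂ (Rep.trivial k (QuaternionGroup n) k) :=
  mem_coboundaries₂_of_section f (lift A X hXX hAXA) (comp_lift_eq_id A X (proj f) hA hX)

/-! In the extension classified by a cocycle `f`, the lifts `(0, a 1)` and `(0, xa 0)` satisfy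
the relations `x² = aⁿ` and `a x a = x` up to the central defects `relatorSq n f` and
`relatorConj n f` (`mk_xa_mul_mk_xa`, `mk_a_mul_mk_xa_mul_mk_a`). -/

variable (n) in
def relatorSq : (QuaternionGroup n × QuaternionGroup n → ZMod 2) →ₗ[ZMod 2] ZMod 2 where
  toFun f := f (xa 0, xa 0) + f (1, 1) + ∑ j ∈ Finset.range n, f (a 1, a j)
  map_add' f g := by simp only [Pi.add_apply, Finset.sum_add_distrib]; ring
  map_smul' c f := by
    simp only [Pi.smul_apply, smul_eq_mul, RingHom.id_apply, mul_add, Finset.mul_sum]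

variable (n) in
def relatorConj : (QuaternionGroup n × QuaternionGroup n → ZMod 2) →ₗ[ZMod 2] ZMod 2 where
  toFun f := f (a 1, xa 0) + f (xa (-1), a 1)
  map_add' f g := by simp only [Pi.add_apply]; ring
  map_smul' c f := by simp only [Pi.smul_apply, smul_eq_mul, RingHom.id_apply]; ring

lemma relatorSq_apply (f : QuaternionGroup n × QuaternionGroup n → ZMod 2) :
    relatorSq n f = f (xa 0, xa 0) + f (1, 1) + ∑ j ∈ Finset.range n, f (a 1, a j) := rfl

lemma relatorConj_apply (f : QuaternionGroup n × QuaternionGroup n → ZMod 2) :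
    relatorConj n f = f (a 1, xa 0) + f (xa (-1), a 1) := rfl

lemma relatorSq_eq_zero_of_mem_coboundaries₂ (hn : Even n)
    {f : QuaternionGroup n × QuaternionGroup n → ZMod 2}
    (hf : f ∈ coboundaries₂ (Rep.trivial (ZMod 2) (QuaternionGroup n) (ZMod 2))) :
    relatorSq n f = 0 := by
  obtain ⟨φ, hφ⟩ := (mem_coboundaries₂_trivial_iff f).1 hf
  have hsum : ∑ j ∈ Finset.range n, f (a 1, a j) = φ 1 - φ (a n) + n * φ (a 1) := by
    rw [Finset.sum_congr rfl fun j _ => by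
        rw [← hφ, a_mul_a, add_comm (1 : ZMod (2 * n)), ← Nat.cast_succ],
      Finset.sum_add_distrib, Finset.sum_range_sub' (fun j : ℕ => φ (a j)), Finset.sum_const,
      Finset.card_range, nsmul_eq_mul, Nat.cast_zero, a_zero]
  rw [relatorSq_apply, hsum, ← hφ, ← hφ, xa_mul_xa, mul_one,
    ZMod.natCast_eq_zero_iff_even.2 hn]
  ring_nf
  reduce_mod_char

lemma relatorConj_eq_zero_of_mem_coboundaries₂
    {f : QuaternionGroup n × QuaternionGroup n → ZMod 2}
    (hf : f ∈ coboundaries₂ (Rep.trivial (ZMod 2) (QuaternionGroup n) (ZMod 2))) :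
    relatorConj n f = 0 := by
  obtain ⟨φ, hφ⟩ := (mem_coboundaries₂_trivial_iff f).1 hf
  rw [relatorConj_apply, ← hφ, ← hφ, a_mul_xa, xa_mul_a, zero_sub, neg_add_cancel]
  ring_nf
  reduce_mod_char

section Extension

variable {f : cocycles₂ (Rep.trivial (ZMod 2) (QuaternionGroup n) (ZMod 2))}

lemma mk_xa_mul_mk_xa :
    (⟨0, xa 0⟩ * ⟨0, xa 0⟩ : CocycleExtension f) =
      inl f (.ofAdd (relatorSq n f)) * ⟨0, a 1⟩ ^ n := by
  rw [mk_zero_pow, inl_mul]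
  ext
  · simp only [mul_fst, relatorSq_apply, a_one_pow]
    ring_nf
    reduce_mod_char
  · simp [xa_mul_xa, a_one_pow]

lemma mk_a_mul_mk_xa_mul_mk_a :
    (⟨0, a 1⟩ * ⟨0, xa 0⟩ * ⟨0, a 1⟩ : CocycleExtension f) =
      inl f (.ofAdd (relatorConj n f)) * ⟨0, xa 0⟩ := by
  rw [inl_mul]
  ext
  · simp [relatorConj_apply, a_mul_xa]
  · simp [a_mul_xa, xa_mul_a]

lemma mem_coboundaries₂_of_relatorSq_eq_zero (hβ : relatorSq n f = 0)
    (hγ : relatorConj n f = 0) :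
    ⇑f ∈ coboundaries₂ (Rep.trivial (ZMod 2) (QuaternionGroup n) (ZMod 2)) :=
  mem_coboundaries₂_of_relations f ⟨0, a 1⟩ ⟨0, xa 0⟩ rfl rfl
    (by rw [mk_xa_mul_mk_xa, hβ, ofAdd_zero, map_one, one_mul])
    (by rw [mk_a_mul_mk_xa_mul_mk_a, hγ, ofAdd_zero, map_one, one_mul])

/-- For odd `n` the defect `z` of `x² = aⁿ` is absorbed by the lift `z * (0, a 1)` of `a 1`,
because `zⁿ = z` and `z² = 1`. -/
lemma mem_coboundaries₂_of_relatorConj_eq_zero_of_odd (hn : Odd n)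
    (hγ : relatorConj n f = 0) :
    ⇑f ∈ coboundaries₂ (Rep.trivial (ZMod 2) (QuaternionGroup n) (ZMod 2)) := by
  set z := inl f (.ofAdd (relatorSq n f))
  have hz (e : CocycleExtension f) : Commute z e := commute_inl _ e
  refine mem_coboundaries₂_of_relations f (z * ⟨0, a 1⟩) ⟨0, xa 0⟩ (by simp [z, inl]) rfl ?_ ?_
  · rw [(hz _).mul_pow, ← map_pow, ← ofAdd_nsmul, nsmul_eq_mul,
      ZMod.natCast_eq_one_iff_odd.2 hn, one_mul, mk_xa_mul_mk_xa]
  · calc z * ⟨0, a 1⟩ * ⟨0, xa 0⟩ * (z * ⟨0, a 1⟩)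
        = z * z * (⟨0, a 1⟩ * ⟨0, xa 0⟩ * ⟨0, a 1⟩) := by simp only [mul_assoc, (hz _).left_comm]
      _ = ⟨0, xa 0⟩ := by
        rw [← map_mul, ← ofAdd_add, CharTwo.add_self_eq_zero, mk_a_mul_mk_xa_mul_mk_a, hγ,
          ofAdd_zero, map_one, one_mul, one_mul]

end Extension

variable (n) in
def modTwo : ZMod (2 * n) →+* ZMod 2 := ZMod.castHom (dvd_mul_right 2 n) (ZMod 2)

variable (n) in
def xaIndicator : QuaternionGroup n → ZMod 2
  | a _ => 0
  | xa _ => 1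

variable (n) in
def indexModTwo : QuaternionGroup n → ZMod 2
  | a i => modTwo n i
  | xa i => modTwo n i

variable (n) in
/-- For odd `n`, the abelianization of `QuaternionGroup n`, which is cyclic of order `4`
generated by the image of `xa 0`. -/
def toZModFour : QuaternionGroup n → ZMod 4
  | a i => 2 * ((modTwo n i).val : ZMod 4)
  | xa i => 1 + 2 * ((modTwo n i).val : ZMod 4)

lemma xaIndicator_mul (g h : QuaternionGroup n) :
    xaIndicator n (g * h) = xaIndicator n g + xaIndicator n h := by
  rcases g with i | i <;> rcases h with j | j <;>
    simp [xaIndicator, a_mul_a, a_mul_xa, xa_mul_a, xa_mul_xa]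
  decide

lemma indexModTwo_mul (hn : Even n) (g h : QuaternionGroup n) :
    indexModTwo n (g * h) = indexModTwo n g + indexModTwo n h := by
  have hn' : modTwo n n = 0 := by rw [map_natCast, ZMod.natCast_eq_zero_iff_even.2 hn]
  rcases g with i | i <;> rcases h with j | j <;>
    simp [indexModTwo, a_mul_a, a_mul_xa, xa_mul_a, xa_mul_xa, hn', CharTwo.sub_eq_add, add_comm]

lemma toZModFour_mul (hn : Odd n) (g h : QuaternionGroup n) :
    toZModFour n (g * h) = toZModFour n g + toZModFour n h := by
  have hn' : modTwo n n = 1 := by rw [map_natCast, ZMod.natCast_eq_one_iff_odd.2 hn]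
  rcases g with i | i <;> rcases h with j | j <;>
    simp only [toZModFour, a_mul_a, a_mul_xa, xa_mul_a, xa_mul_xa, map_add, map_sub, hn'] <;>
    generalize modTwo n i = u <;> generalize modTwo n j = v <;> revert u v <;> decide

lemma relatorConj_carry_toZModFour :
    relatorConj n (fun p => carry (toZModFour n p.1) (toZModFour n p.2)) = 1 := by
  simp [relatorConj_apply, toZModFour, map_neg]
  decide

lemma relatorSq_cup_xaIndicator :
    relatorSq n (fun p => xaIndicator n p.1 * xaIndicator n p.2) = 1 := by
  simp [relatorSq_apply, xaIndicator, ← a_zero]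

lemma relatorConj_cup_xaIndicator :
    relatorConj n (fun p => xaIndicator n p.1 * xaIndicator n p.2) = 0 := by
  simp [relatorConj_apply, xaIndicator]

lemma relatorSq_cup_indexModTwo_xaIndicator :
    relatorSq n (fun p => indexModTwo n p.1 * xaIndicator n p.2) = 0 := by
  simp [relatorSq_apply, indexModTwo, xaIndicator, ← a_zero]

lemma relatorConj_cup_indexModTwo_xaIndicator :
    relatorConj n (fun p => indexModTwo n p.1 * xaIndicator n p.2) = 1 := by
  simp [relatorConj_apply, indexModTwo, xaIndicator]

variable (n) in
noncomputable def H2EquivOfOdd (hn : Odd n) :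
    H2 (Rep.trivial (ZMod 2) (QuaternionGroup n) (ZMod 2)) ≃ₗ[ZMod 2] ZMod 2 :=
  H2EquivOfSurjective (relatorConj n ∘ₗ (cocycles₂ _).subtype)
    (fun t => ⟨t • ⟨_, carry_comp_mem_cocycles₂ (toZModFour_mul hn)⟩, by
      simp [relatorConj_carry_toZModFour]⟩)
    (fun _ => ⟨mem_coboundaries₂_of_relatorConj_eq_zero_of_odd hn,
      relatorConj_eq_zero_of_mem_coboundaries₂⟩)

variable (n) in
noncomputable def H2EquivOfEven (hn : Even n) :
    H2 (Rep.trivial (ZMod 2) (QuaternionGroup n) (ZMod 2)) ≃ₗ[ZMod 2] (Fin 2 → ZMod 2) :=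
  H2EquivOfSurjective
    (LinearMap.pi ![relatorSq n ∘ₗ (cocycles₂ _).subtype, relatorConj n ∘ₗ (cocycles₂ _).subtype])
    (fun v => ⟨v 0 • ⟨_, cup_mem_cocycles₂ xaIndicator_mul xaIndicator_mul⟩ +
        v 1 • ⟨_, cup_mem_cocycles₂ (indexModTwo_mul hn) xaIndicator_mul⟩, by
      ext i
      fin_cases i <;>
        simp [relatorSq_cup_xaIndicator, relatorConj_cup_xaIndicator,
          relatorSq_cup_indexModTwo_xaIndicator, relatorConj_cup_indexModTwo_xaIndicator]⟩)
    (fun _ => by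
      simp only [funext_iff, Fin.forall_fin_two, LinearMap.pi_apply]
      exact ⟨fun h => mem_coboundaries₂_of_relatorSq_eq_zero h.1 h.2,
        fun h => ⟨relatorSq_eq_zero_of_mem_coboundaries₂ hn h,
          relatorConj_eq_zero_of_mem_coboundaries₂ h⟩⟩)

end QuaternionGroup

theorem h2_quaternionGroup_zmod_two_general (n : ℕ) :
    (Odd n → Nonempty (H2mod (QuaternionGroup n) 2 ≃+ ZMod 2)) ∧
    (Even n → Nonempty (H2mod (QuaternionGroup n) 2 ≃+ (Fin 2 → ZMod 2))) :=
  ⟨fun hn => ⟨(QuaternionGroup.H2EquivOfOdd n hn).toAddEquiv⟩,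
    fun hn => ⟨(QuaternionGroup.H2EquivOfEven n hn).toAddEquiv⟩⟩

/-- For `n ≥ 1`: the mod 2 second cohomology of the dicyclic (binary dihedral) group
`Q_{4n} = QuaternionGroup n` is `ℤ/2ℤ` if `n` is odd and `(ℤ/2ℤ)²` if `n` is even. -/
theorem h2_quaternionGroup_zmod_two (n : ℕ) (hn : 1 ≤ n) :
    (Odd n → Nonempty (H2mod (QuaternionGroup n) 2 ≃+ ZMod 2)) ∧
    (Even n → Nonempty (H2mod (QuaternionGroup n) 2 ≃+ (Fin 2 → ZMod 2))) :=
  h2_quaternionGroup_zmod_two_general n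
end

section
/- Suppose τ, g ∈ Aut_ℂ(K) satisfy τ(x) = x⁻¹, τ(y) = y⁻¹ and g(x) = −x, g(y) = −y. Then τ ∘ τ = id, and there exists σ ∈ Aut_ℂ(K) such that σ ∘ τ ∘ σ⁻¹ = g; that is, the standard quadratic involution of the plane is conjugate in the Cremona group to a linear involution. -/
/-- The field `K = ℂ(x, y)` of rational functions in two variables over `ℂ`, realized as the
fraction field of the polynomial ring `ℂ[x, y]`. Its group of `ℂ`-algebra automorphisms
`K ≃ₐ[ℂ] K` is the plane Cremona group `Cr(2)`. -/
noncomputable abbrev PlaneFunctionField : Type :=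
  FractionRing (MvPolynomial (Fin 2) ℂ)

/-- The element `x` of `K = ℂ(x, y)`. -/
noncomputable def Xf : PlaneFunctionField :=
  algebraMap (MvPolynomial (Fin 2) ℂ) PlaneFunctionField (MvPolynomial.X 0)

/-- The element `y` of `K = ℂ(x, y)`. -/
noncomputable def Yf : PlaneFunctionField :=
  algebraMap (MvPolynomial (Fin 2) ℂ) PlaneFunctionField (MvPolynomial.X 1)

/-!
The Cayley transform `c(t) = (1 + t) / (1 - t)` satisfies `c(-t) = c(t)⁻¹`. Hence the
automorphism `σ` substituting `c(x), c(y)` for `x, y` satisfies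
`σ (τ x) = (σ x)⁻¹ = c(x)⁻¹ = c(-x) = g (σ x)`, and likewise for `y`, so `σ τ = g σ`.
It exists because `c(t) = 2 / (1 - t) - 1` is obtained from `τ` by composing with the affine
substitutions `t ↦ 1 - t` and `t ↦ 2t - 1`, which are automorphisms of `ℂ[x, y]` and so extend
to its fraction field.
-/

namespace MvPolynomial

variable {σ R : Type*} [CommRing R]

noncomputable def homothetyAlgEquiv (a : Rˣ) (b : R) : MvPolynomial σ R ≃ₐ[R] MvPolynomial σ R :=
  AlgEquiv.ofAlgHom (aeval fun i => C (a : R) * X i + C b)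
    (aeval fun i => C (↑a⁻¹ : R) * (X i - C b))
    (algHom_ext fun i => by
      simp only [AlgHom.comp_apply, aeval_X, map_mul, map_sub, algHom_C, AlgHom.id_apply,
        algebraMap_eq]
      rw [add_sub_cancel_right, ← mul_assoc, ← map_mul, Units.inv_mul, map_one, one_mul])
    (algHom_ext fun i => by
      simp only [AlgHom.comp_apply, aeval_X, map_mul, map_add, algHom_C, AlgHom.id_apply,
        algebraMap_eq]
      rw [← mul_assoc, ← map_mul, Units.mul_inv, map_one, one_mul, sub_add_cancel])

@[simp]
theorem homothetyAlgEquiv_X (a : Rˣ) (b : R) (i : σ) :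
    homothetyAlgEquiv a b (X i) = C (a : R) * X i + C b := by
  simp [homothetyAlgEquiv]

theorem X_ne_one [Nontrivial R] (i : σ) : (X i : MvPolynomial σ R) ≠ 1 := fun h => by
  simpa using congrArg totalDegree h

end MvPolynomial

open MvPolynomial

namespace PlaneFunctionField

theorem algHom_ext {B : Type*} [Semiring B] [Algebra ℂ B] {f f' : PlaneFunctionField →ₐ[ℂ] B}
    (hx : f Xf = f' Xf) (hy : f Yf = f' Yf) : f = f' := by
  ext i
  fin_cases i
  · exact hx
  · exact hy

theorem algEquiv_ext {e e' : PlaneFunctionField ≃ₐ[ℂ] PlaneFunctionField}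
    (hx : e Xf = e' Xf) (hy : e Yf = e' Yf) : e = e' :=
  AlgEquiv.coe_toAlgHom_injective (algHom_ext hx hy)

noncomputable def homothety (a : ℂˣ) (b : ℂ) : PlaneFunctionField ≃ₐ[ℂ] PlaneFunctionField :=
  IsFractionRing.algEquivOfAlgEquiv (homothetyAlgEquiv (σ := Fin 2) a b)

theorem homothety_algebraMap_X (a : ℂˣ) (b : ℂ) (i : Fin 2) :
    homothety a b (algebraMap (MvPolynomial (Fin 2) ℂ) _ (X i)) =
      algebraMap ℂ _ a * algebraMap (MvPolynomial (Fin 2) ℂ) _ (X i) + algebraMap ℂ _ b := by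
  simp [homothety, IsScalarTower.algebraMap_apply ℂ (MvPolynomial (Fin 2) ℂ) PlaneFunctionField]

theorem Xf_ne_one : Xf ≠ 1 :=
  (map_ne_one_iff _ (IsFractionRing.injective _ _)).2 (X_ne_one 0)

theorem Yf_ne_one : Yf ≠ 1 :=
  (map_ne_one_iff _ (IsFractionRing.injective _ _)).2 (X_ne_one 1)

theorem homothety_Xf (a : ℂˣ) (b : ℂ) :
    homothety a b Xf = algebraMap ℂ _ a * Xf + algebraMap ℂ _ b :=
  homothety_algebraMap_X a b 0

theorem homothety_Yf (a : ℂˣ) (b : ℂ) :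
    homothety a b Yf = algebraMap ℂ _ a * Yf + algebraMap ℂ _ b :=
  homothety_algebraMap_X a b 1

end PlaneFunctionField

section CayleyTransform

variable {R F : Type*} [CommSemiring R] [Field F] [Algebra R F]

theorem AlgEquiv.mul_mul_apply_eq_div {a τ m : F ≃ₐ[R] F} {t : F} (ht : t ≠ 1)
    (ha : a t = 1 - t) (hτ : τ t = t⁻¹) (hm : m t = 2 * t - 1) :
    (a * τ * m) t = (1 + t) / (1 - t) := by
  have h : 1 - t ≠ 0 := sub_ne_zero.2 ht.symm
  simp only [AlgEquiv.mul_apply, hm, map_sub, map_mul, map_ofNat, map_one, hτ, map_inv₀, ha]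
  field_simp
  ring

theorem AlgEquiv.mul_apply_eq_mul_apply_of_apply_eq_div {σ τ g : F ≃ₐ[R] F} {t : F}
    (hσ : σ t = (1 + t) / (1 - t)) (hτ : τ t = t⁻¹) (hg : g t = -t) :
    (σ * τ) t = (g * σ) t := by
  simp only [AlgEquiv.mul_apply, hτ, map_inv₀, hσ, map_div₀, map_add, map_sub, map_one, hg,
    inv_div]
  ring

end CayleyTransform

open PlaneFunctionField

/-- The standard quadratic involution `(x, y) ↦ (x⁻¹, y⁻¹)` of the plane is an involution and
is conjugate in the Cremona group to the linear involution `(x, y) ↦ (−x, −y)`. -/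
theorem standard_quadratic_involution_conjugate_linear
    (τ g : PlaneFunctionField ≃ₐ[ℂ] PlaneFunctionField)
    (hτx : τ Xf = Xf⁻¹) (hτy : τ Yf = Yf⁻¹)
    (hgx : g Xf = -Xf) (hgy : g Yf = -Yf) :
    τ * τ = 1 ∧ ∃ σ : PlaneFunctionField ≃ₐ[ℂ] PlaneFunctionField, σ * τ * σ⁻¹ = g := by
  refine ⟨algEquiv_ext (by simp [hτx]) (by simp [hτy]), ?_⟩
  set σ := homothety (-1) 1 * τ * homothety (Units.mk0 2 two_ne_zero) (-1)
  have hσx : σ Xf = (1 + Xf) / (1 - Xf) :=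
    AlgEquiv.mul_mul_apply_eq_div Xf_ne_one (by simp [homothety_Xf, neg_add_eq_sub]) hτx
      (by simp [homothety_Xf, map_ofNat, ← sub_eq_add_neg])
  have hσy : σ Yf = (1 + Yf) / (1 - Yf) :=
    AlgEquiv.mul_mul_apply_eq_div Yf_ne_one (by simp [homothety_Yf, neg_add_eq_sub]) hτy
      (by simp [homothety_Yf, map_ofNat, ← sub_eq_add_neg])
  exact ⟨σ, mul_inv_eq_iff_eq_mul.2 (algEquiv_ext
    (AlgEquiv.mul_apply_eq_mul_apply_of_apply_eq_div hσx hτx hgx)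
    (AlgEquiv.mul_apply_eq_mul_apply_of_apply_eq_div hσy hτy hgy))⟩
end

section
/- Let p₀, p₁, p₂, q₀, q₁, q₂ ∈ ℂ(x) with p₁² − p₀p₂ ≠ 0 and q₁² − q₀q₂ ≠ 0. Suppose σ, σ' ∈ Aut_ℂ(K) each fix ℂ(x) pointwise and satisfy σ(y) = (−p₁·y − p₂)/(p₀·y + p₁) and σ'(y) = (−q₁·y − q₂)/(q₀·y + q₁), and assume σ ≠ σ'. Then σ ∘ σ' = σ' ∘ σ if and only if p₀q₂ − 2p₁q₁ + p₂q₀ = 0. -/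
/-- The subfield `ℂ(x)` of `K = ℂ(x, y)`. -/
noncomputable def Cx : IntermediateField ℂ PlaneFunctionField :=
  IntermediateField.adjoin ℂ {Xf}

open MvPolynomial in
noncomputable def djShiftPoly : MvPolynomial (Fin 2) ℂ ≃ₐ[ℂ] MvPolynomial (Fin 2) ℂ :=
  AlgEquiv.ofAlgHom (aeval ![X 0, X 1 + 1]) (aeval ![X 0, X 1 - 1])
    (by apply MvPolynomial.algHom_ext; intro i; fin_cases i <;> simp)
    (by apply MvPolynomial.algHom_ext; intro i; fin_cases i <;> simp)

noncomputable def djShift : PlaneFunctionField ≃+* PlaneFunctionField :=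
  IsFractionRing.ringEquivOfRingEquiv djShiftPoly.toRingEquiv

lemma djShift_algebraMap (p : MvPolynomial (Fin 2) ℂ) :
    djShift (algebraMap _ PlaneFunctionField p) = algebraMap _ _ (djShiftPoly p) :=
  IsFractionRing.ringEquivOfRingEquiv_algebraMap _ p

lemma djShift_Xf : djShift Xf = Xf := by
  rw [Xf, djShift_algebraMap]; congr 1; simp [djShiftPoly]

lemma djShift_Yf : djShift Yf = Yf + 1 := by
  rw [Yf, djShift_algebraMap]
  rw [show djShiftPoly (MvPolynomial.X 1) = MvPolynomial.X 1 + 1 by simp [djShiftPoly]]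
  rw [(algebraMap (MvPolynomial (Fin 2) ℂ) PlaneFunctionField).map_add,
    (algebraMap (MvPolynomial (Fin 2) ℂ) PlaneFunctionField).map_one]

lemma djShift_C (c : ℂ) :
    djShift (algebraMap ℂ PlaneFunctionField c) = algebraMap ℂ PlaneFunctionField c := by
  rw [IsScalarTower.algebraMap_apply ℂ (MvPolynomial (Fin 2) ℂ) PlaneFunctionField,
    djShift_algebraMap]
  congr 1
  simp [djShiftPoly]

noncomputable def djFixed : IntermediateField ℂ PlaneFunctionField where
  carrier := {z | djShift z = z}
  mul_mem' {a b} ha hb := by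
    simp only [Set.mem_setOf_eq, map_mul] at *; rw [ha, hb]
  add_mem' {a b} ha hb := by
    simp only [Set.mem_setOf_eq, map_add] at *; rw [ha, hb]
  algebraMap_mem' := djShift_C
  inv_mem' a ha := by
    simp only [Set.mem_setOf_eq, map_inv₀] at *; rw [ha]

lemma djShift_fix {z : PlaneFunctionField} (hz : z ∈ Cx) : djShift z = z := by
  have hle : Cx ≤ djFixed := IntermediateField.adjoin_le_iff.mpr (by
    intro w hw; rcases hw with rfl; show djShift Xf = Xf; exact djShift_Xf)
  exact hle hz

lemma charzero_K : (2 : PlaneFunctionField) ≠ 0 := by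
  haveI : CharZero PlaneFunctionField :=
    charZero_of_injective_algebraMap (algebraMap ℂ PlaneFunctionField).injective
  exact two_ne_zero

lemma dj_indep (c₀ c₁ c₂ : PlaneFunctionField) (h₀ : c₀ ∈ Cx) (h₁ : c₁ ∈ Cx) (h₂ : c₂ ∈ Cx)
    (h : c₂ * Yf ^ 2 + c₁ * Yf + c₀ = 0) : c₀ = 0 ∧ c₁ = 0 ∧ c₂ = 0 := by
  have e1 : c₂ * (Yf + 1) ^ 2 + c₁ * (Yf + 1) + c₀ = 0 := by
    have h' := congrArg djShift h
    simpa only [map_add, map_mul, map_pow, djShift_Yf, djShift_fix h₀, djShift_fix h₁,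
      djShift_fix h₂, map_zero] using h'
  have e2 : c₂ * (2 * Yf + 1) + c₁ = 0 := by linear_combination e1 - h
  have e3 : c₂ * (2 * (Yf + 1) + 1) + c₁ = 0 := by
    have h' := congrArg djShift e2
    simpa only [map_add, map_mul, map_one, map_ofNat, djShift_Yf, djShift_fix h₁,
      djShift_fix h₂, map_zero] using h'
  have hc₂ : c₂ = 0 := by
    have h2 : (2 : PlaneFunctionField) * c₂ = 0 := by linear_combination e3 - e2
    exact (mul_eq_zero.mp h2).resolve_left charzero_K
  have hc₁ : c₁ = 0 := by linear_combination e2 - (2 * Yf + 1) * hc₂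
  have hc₀ : c₀ = 0 := by linear_combination h - Yf ^ 2 * hc₂ - Yf * hc₁
  exact ⟨hc₀, hc₁, hc₂⟩

lemma dj_ext (σ τ : PlaneFunctionField ≃ₐ[ℂ] PlaneFunctionField)
    (hx : σ Xf = τ Xf) (hy : σ Yf = τ Yf) : σ = τ := by
  have key : (σ : PlaneFunctionField →+* PlaneFunctionField)
      = (τ : PlaneFunctionField →+* PlaneFunctionField) := by
    apply IsLocalization.ringHom_ext (nonZeroDivisors (MvPolynomial (Fin 2) ℂ))
    apply MvPolynomial.ringHom_ext
    · intro r
      simp only [RingHom.comp_apply, ← MvPolynomial.algebraMap_eq,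
        ← IsScalarTower.algebraMap_apply ℂ (MvPolynomial (Fin 2) ℂ) PlaneFunctionField]
      show σ _ = τ _
      rw [σ.commutes, τ.commutes]
    · intro i
      simp only [RingHom.comp_apply]
      show σ (algebraMap _ _ _) = τ (algebraMap _ _ _)
      fin_cases i
      · exact hx
      · exact hy
  exact AlgEquiv.ext fun z => RingHom.congr_fun key z

lemma frac_eq {n₁ d₁ n₂ d₂ m : PlaneFunctionField} (hm : m ≠ 0)
    (hn : n₁ * m = n₂) (hd : d₁ * m = d₂) : n₁ / d₁ = n₂ / d₂ := by
  rw [← hn, ← hd, mul_div_mul_right _ _ hm]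

lemma Xf_mem : Xf ∈ Cx := IntermediateField.subset_adjoin ℂ {Xf} rfl


set_option maxHeartbeats 2000000 in
set_option synthInstance.maxHeartbeats 400000 in
/-- Two distinct de Jonquières involutions `σ : y ↦ (−p₁y − p₂)/(p₀y + p₁)` and
`σ' : y ↦ (−q₁y − q₂)/(q₀y + q₁)` commute if and only if `p₀q₂ − 2p₁q₁ + p₂q₀ = 0`. -/
theorem deJonquieres_involutions_commute_iff
    (p₀ p₁ p₂ q₀ q₁ q₂ : PlaneFunctionField)
    (hp₀ : p₀ ∈ Cx) (hp₁ : p₁ ∈ Cx) (hp₂ : p₂ ∈ Cx)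
    (hq₀ : q₀ ∈ Cx) (hq₁ : q₁ ∈ Cx) (hq₂ : q₂ ∈ Cx)
    (hP : p₁ ^ 2 - p₀ * p₂ ≠ 0) (hQ : q₁ ^ 2 - q₀ * q₂ ≠ 0)
    (σ σ' : PlaneFunctionField ≃ₐ[ℂ] PlaneFunctionField)
    (hσx : ∀ z ∈ Cx, σ z = z) (hσ'x : ∀ z ∈ Cx, σ' z = z)
    (hσy : σ Yf = (-(p₁ * Yf) - p₂) / (p₀ * Yf + p₁))
    (hσ'y : σ' Yf = (-(q₁ * Yf) - q₂) / (q₀ * Yf + q₁))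
    (hne : σ ≠ σ') :
    σ * σ' = σ' * σ ↔ p₀ * q₂ - 2 * (p₁ * q₁) + p₂ * q₀ = 0 := by
  have hXf := Xf_mem
  -- memberships of the matrix entries
  have ma : q₁*p₁ - q₂*p₀ ∈ Cx := sub_mem (mul_mem hq₁ hp₁) (mul_mem hq₂ hp₀)
  have mb : q₁*p₂ - q₂*p₁ ∈ Cx := sub_mem (mul_mem hq₁ hp₂) (mul_mem hq₂ hp₁)
  have mc : q₁*p₀ - q₀*p₁ ∈ Cx := sub_mem (mul_mem hq₁ hp₀) (mul_mem hq₀ hp₁)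
  have md : q₁*p₁ - q₀*p₂ ∈ Cx := sub_mem (mul_mem hq₁ hp₁) (mul_mem hq₀ hp₂)
  have ma' : p₁*q₁ - p₂*q₀ ∈ Cx := sub_mem (mul_mem hp₁ hq₁) (mul_mem hp₂ hq₀)
  have mb' : p₁*q₂ - p₂*q₁ ∈ Cx := sub_mem (mul_mem hp₁ hq₂) (mul_mem hp₂ hq₁)
  have mc' : p₁*q₀ - p₀*q₁ ∈ Cx := sub_mem (mul_mem hp₁ hq₀) (mul_mem hp₀ hq₁)
  have md' : p₁*q₁ - p₀*q₂ ∈ Cx := sub_mem (mul_mem hp₁ hq₁) (mul_mem hp₀ hq₂)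
  -- nonvanishing of denominators
  have hdM : p₀ * Yf + p₁ ≠ 0 := by
    intro h0
    obtain ⟨h1, h2, -⟩ := dj_indep p₁ p₀ 0 hp₁ hp₀ (zero_mem _) (by linear_combination h0)
    exact hP (by rw [h1, h2]; ring)
  have heM : q₀ * Yf + q₁ ≠ 0 := by
    intro h0
    obtain ⟨h1, h2, -⟩ := dj_indep q₁ q₀ 0 hq₁ hq₀ (zero_mem _) (by linear_combination h0)
    exact hQ (by rw [h1, h2]; ring)
  have hdet : (q₀*q₂ - q₁^2) * (p₀*p₂ - p₁^2) ≠ 0 :=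
    mul_ne_zero (fun h => hQ (by linear_combination -h)) (fun h => hP (by linear_combination -h))
  have hcd : (q₁*p₀ - q₀*p₁) * Yf + (q₁*p₁ - q₀*p₂) ≠ 0 := by
    intro h0
    obtain ⟨h1, h2, -⟩ := dj_indep (q₁*p₁ - q₀*p₂) (q₁*p₀ - q₀*p₁) 0 md mc (zero_mem _)
      (by linear_combination h0)
    exact hdet (by linear_combination (q₁*p₁ - q₂*p₀) * h1 - (q₁*p₂ - q₂*p₁) * h2)
  have hc'd' : (p₁*q₀ - p₀*q₁) * Yf + (p₁*q₁ - p₀*q₂) ≠ 0 := by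
    intro h0
    obtain ⟨h1, h2, -⟩ := dj_indep (p₁*q₁ - p₀*q₂) (p₁*q₀ - p₀*q₁) 0 md' mc' (zero_mem _)
      (by linear_combination h0)
    exact hdet (by linear_combination (p₁*q₁ - p₂*q₀) * h1 - (p₁*q₂ - p₂*q₁) * h2)
  -- the two compositions on Yf
  have hσσ' : σ (σ' Yf) =
      ((q₁*p₁ - q₂*p₀) * Yf + (q₁*p₂ - q₂*p₁)) / ((q₁*p₀ - q₀*p₁) * Yf + (q₁*p₁ - q₀*p₂)) := by
    rw [hσ'y, map_div₀, map_sub, map_neg, map_mul, map_add, map_mul,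
      hσx _ hq₀, hσx _ hq₁, hσx _ hq₂, hσy]
    have hS : ((-(p₁*Yf) - p₂)/(p₀*Yf+p₁)) * (p₀*Yf+p₁) = -(p₁*Yf) - p₂ :=
      div_mul_cancel₀ _ hdM
    exact frac_eq hdM (by linear_combination (-q₁) * hS) (by linear_combination q₀ * hS)
  have hσ'σ : σ' (σ Yf) =
      ((p₁*q₁ - p₂*q₀) * Yf + (p₁*q₂ - p₂*q₁)) / ((p₁*q₀ - p₀*q₁) * Yf + (p₁*q₁ - p₀*q₂)) := by
    rw [hσy, map_div₀, map_sub, map_neg, map_mul, map_add, map_mul,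
      hσ'x _ hp₀, hσ'x _ hp₁, hσ'x _ hp₂, hσ'y]
    have hS : ((-(q₁*Yf) - q₂)/(q₀*Yf+q₁)) * (q₀*Yf+q₁) = -(q₁*Yf) - q₂ :=
      div_mul_cancel₀ _ heM
    exact frac_eq heM (by linear_combination (-p₁) * hS) (by linear_combination p₀ * hS)
  constructor
  · intro h
    have heq : ((q₁*p₁ - q₂*p₀) * Yf + (q₁*p₂ - q₂*p₁)) * ((p₁*q₀ - p₀*q₁) * Yf + (p₁*q₁ - p₀*q₂))
        = ((p₁*q₁ - p₂*q₀) * Yf + (p₁*q₂ - p₂*q₁)) * ((q₁*p₀ - q₀*p₁) * Yf + (q₁*p₁ - q₀*p₂)) := by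
      have e : ((q₁*p₁ - q₂*p₀) * Yf + (q₁*p₂ - q₂*p₁)) / ((q₁*p₀ - q₀*p₁) * Yf + (q₁*p₁ - q₀*p₂))
          = ((p₁*q₁ - p₂*q₀) * Yf + (p₁*q₂ - p₂*q₁)) / ((p₁*q₀ - p₀*q₁) * Yf + (p₁*q₁ - p₀*q₂)) := by
        rw [← hσσ', ← hσ'σ, ← AlgEquiv.mul_apply, ← AlgEquiv.mul_apply, h]
      exact (div_eq_div_iff hcd hc'd').mp e
    by_contra hgoal
    obtain ⟨h0, h1, h2⟩ := dj_indep
      ((q₁*p₂ - q₂*p₁) * (p₁*q₁ - p₀*q₂) - (p₁*q₂ - p₂*q₁) * (q₁*p₁ - q₀*p₂))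
      ((q₁*p₁ - q₂*p₀) * (p₁*q₁ - p₀*q₂) + (q₁*p₂ - q₂*p₁) * (p₁*q₀ - p₀*q₁)
        - ((p₁*q₁ - p₂*q₀) * (q₁*p₁ - q₀*p₂) + (p₁*q₂ - p₂*q₁) * (q₁*p₀ - q₀*p₁)))
      ((q₁*p₁ - q₂*p₀) * (p₁*q₀ - p₀*q₁) - (p₁*q₁ - p₂*q₀) * (q₁*p₀ - q₀*p₁))
      (sub_mem (mul_mem mb md') (mul_mem mb' md))
      (sub_mem (add_mem (mul_mem ma md') (mul_mem mb mc'))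
        (add_mem (mul_mem ma' md) (mul_mem mb' mc)))
      (sub_mem (mul_mem ma mc') (mul_mem ma' mc))
      (by linear_combination heq)
    have hb0 : q₁*p₂ - q₂*p₁ = 0 := by
      have ht : (p₀ * q₂ - 2 * (p₁ * q₁) + p₂ * q₀) * (q₁*p₂ - q₂*p₁) = 0 := by
        linear_combination -h0
      exact (mul_eq_zero.mp ht).resolve_left hgoal
    have hc0 : q₁*p₀ - q₀*p₁ = 0 := by
      have ht : (p₀ * q₂ - 2 * (p₁ * q₁) + p₂ * q₀) * (q₁*p₀ - q₀*p₁) = 0 := by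
        linear_combination h2
      exact (mul_eq_zero.mp ht).resolve_left hgoal
    have had : q₀*p₂ - q₂*p₀ = 0 := by
      have ht : (p₀ * q₂ - 2 * (p₁ * q₁) + p₂ * q₀) * (q₀*p₂ - q₂*p₀) = 0 := by
        linear_combination -h1
      exact (mul_eq_zero.mp ht).resolve_left hgoal
    apply hne
    apply dj_ext
    · rw [hσx _ hXf, hσ'x _ hXf]
    · rw [hσy, hσ'y, div_eq_div_iff hdM heM]
      linear_combination Yf^2 * hc0 - Yf * had - hb0
  · intro hgoal
    apply dj_ext
    · simp only [AlgEquiv.mul_apply, hσ'x _ hXf, hσx _ hXf]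
    · rw [AlgEquiv.mul_apply, AlgEquiv.mul_apply, hσσ', hσ'σ, div_eq_div_iff hcd hc'd']
      linear_combination ((q₁*p₀ - q₀*p₁) * Yf^2 - (q₀*p₂ - q₂*p₀) * Yf - (q₁*p₂ - q₂*p₁)) * hgoal
end

section
/- Let n ≥ 1, let ε ∈ ℂ be a primitive n-th root of unity, and let a be an integer. Suppose g, h ∈ Aut_ℂ(K) satisfy g(x) = ε·x, g(y) = εᵃ·y and h(x) = ε·x, h(y) = y. Then g and h are conjugate in Aut_ℂ(K). (Consequently, all diagonal linear automorphisms of the plane of order n generate conjugate cyclic subgroups of the Cremona group.) -/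
/-- The image of a complex constant in `K = ℂ(x, y)`. -/
noncomputable def Cf (c : ℂ) : PlaneFunctionField :=
  algebraMap ℂ PlaneFunctionField c

/-!
The monomial map `σ : (x, y) ↦ (x, xᵃ y)` is a Cremona transformation, and it conjugates `g`
into `h`: both `σ ∘ g` and `h ∘ σ` send `x ↦ εx` and `y ↦ εᵃ xᵃ y`. We obtain `σ` as the
`a`-th power of the shear `(x, y) ↦ (x, xy)`, whose inverse is `(x, y) ↦ (x, y / x)`.
-/

open MvPolynomial

theorem MvPolynomial.fractionRing_algHom_ext {σ R L : Type*} [CommRing R] [IsDomain R]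
    [Field L] [Algebra R L]
    {f f' : FractionRing (MvPolynomial σ R) →ₐ[R] L}
    (h : ∀ i, f (algebraMap _ _ (X i : MvPolynomial σ R)) =
      f' (algebraMap _ _ (X i : MvPolynomial σ R))) :
    f = f' := by
  have hpoly : f.comp (IsScalarTower.toAlgHom R _ _) = f'.comp (IsScalarTower.toAlgHom R _ _) :=
    MvPolynomial.algHom_ext h
  exact AlgHom.coe_ringHom_injective <|
    IsFractionRing.ringHom_ext fun p => AlgHom.congr_fun hpoly p

theorem MvPolynomial.fractionRing_algHom_surjective {σ R : Type*} [CommRing R] [IsDomain R]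
    {f : FractionRing (MvPolynomial σ R) →ₐ[R] FractionRing (MvPolynomial σ R)}
    (h : ∀ i, algebraMap _ _ (X i : MvPolynomial σ R) ∈ f.range) : Function.Surjective f := by
  have hpoly (p : MvPolynomial σ R) :
      algebraMap (MvPolynomial σ R) (FractionRing (MvPolynomial σ R)) p ∈ f.range := by
    induction p using MvPolynomial.induction_on with
    | C c =>
      rw [← algebraMap_eq, ← IsScalarTower.algebraMap_apply]
      exact f.range.algebraMap_mem c
    | add p q hp hq => rw [map_add]; exact add_mem hp hq
    | mul_X p i hp => rw [map_mul]; exact mul_mem hp (h i)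
  intro z
  obtain ⟨p, q, -, rfl⟩ := IsFractionRing.div_surjective (A := MvPolynomial σ R) z
  obtain ⟨p', hp'⟩ := hpoly p
  obtain ⟨q', hq'⟩ := hpoly q
  exact ⟨p' / q', by rw [map_div₀, ← hp', ← hq']; rfl⟩

theorem MvPolynomial.algebraMap_X_ne_zero {σ R : Type*} [CommRing R] [IsDomain R] (i : σ) :
    algebraMap (MvPolynomial σ R) (FractionRing (MvPolynomial σ R)) (X i) ≠ 0 :=
  (map_ne_zero_iff _ (IsFractionRing.injective _ _)).mpr (X_ne_zero i)

theorem AlgEquiv.zpow_apply_of_apply_eq {R A : Type*} [CommSemiring R] [Semiring A]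
    [Algebra R A] (e : A ≃ₐ[R] A) {u : A} (heu : e u = u) (a : ℤ) : (e ^ a) u = u :=
  (MulAction.stabilizer (A ≃ₐ[R] A) u).zpow_mem (x := e) heu a

theorem AlgEquiv.zpow_apply_of_apply_eq_mul {R L : Type*} [CommSemiring R] [Field L]
    [Algebra R L] (e : L ≃ₐ[R] L) {u v : L} (hu : u ≠ 0) (heu : e u = u) (hev : e v = u * v)
    (a : ℤ) : (e ^ a) v = u ^ a * v := by
  have hinv : e⁻¹ v = u⁻¹ * v := by
    apply e.injective
    rw [← AlgEquiv.mul_apply, mul_inv_cancel, AlgEquiv.one_apply, map_mul, map_inv₀, heu, hev,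
      inv_mul_cancel_left₀ hu]
  induction a using Int.induction_on with
  | zero => simp
  | succ k ih =>
    rw [zpow_add_one, AlgEquiv.mul_apply, hev, map_mul, e.zpow_apply_of_apply_eq heu, ih,
      zpow_add_one₀ hu]
    ring
  | pred k ih =>
    rw [zpow_sub_one, AlgEquiv.mul_apply, hinv, map_mul, map_inv₀, e.zpow_apply_of_apply_eq heu,
      ih, zpow_sub_one₀ hu]
    ring

theorem MvPolynomial.aeval_shear_injective {R : Type*} [Field R] [Infinite R] :
    Function.Injective
      (aeval ![X 0, X 0 * X 1] : MvPolynomial (Fin 2) R →ₐ[R] MvPolynomial (Fin 2) R) := by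
  refine (injective_iff_map_eq_zero _).mpr fun r hr => ?_
  by_contra hr0
  -- a point off the line `x = 0` where `r` does not vanish, at which the shear is invertible
  obtain ⟨c, hc⟩ : ∃ c : Fin 2 → R, eval c (X 0 * r) ≠ 0 := by
    by_contra! hc
    exact mul_ne_zero (X_ne_zero 0) hr0 (MvPolynomial.funext fun c => by simpa using hc c)
  rw [eval_mul, eval_X, mul_ne_zero_iff] at hc
  have hshear :
      (aeval ![c 0, c 1 / c 0]).comp (aeval ![X 0, X 0 * X 1]) = aeval (R := R) c := by
    rw [comp_aeval]
    congr 1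
    ext i
    fin_cases i <;> simp [mul_div_cancel₀ _ hc.1]
  have hr_eval := AlgHom.congr_fun hshear r
  rw [AlgHom.comp_apply, hr, map_zero] at hr_eval
  exact hc.2 (by simpa [coe_aeval_eq_eval] using hr_eval.symm)

section Shear

variable {R : Type*} [Field R] [Infinite R]

local notation "𝐱" =>
  algebraMap (MvPolynomial (Fin 2) R) (FractionRing (MvPolynomial (Fin 2) R)) (X 0)
local notation "𝐲" =>
  algebraMap (MvPolynomial (Fin 2) R) (FractionRing (MvPolynomial (Fin 2) R)) (X 1)

theorem MvPolynomial.aeval_shear_fractionRing_injective :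
    Function.Injective (aeval (R := R) ![𝐱, 𝐱 * 𝐲]) := by
  have hcomp : aeval (R := R) ![𝐱, 𝐱 * 𝐲] =
      (IsScalarTower.toAlgHom R (MvPolynomial (Fin 2) R) _).comp (aeval ![X 0, X 0 * X 1]) := by
    rw [comp_aeval]
    congr 1
    ext i
    fin_cases i <;> simp
  rw [hcomp]
  exact (IsFractionRing.injective _ _).comp aeval_shear_injective

noncomputable def planeShearHom :
    FractionRing (MvPolynomial (Fin 2) R) →ₐ[R] FractionRing (MvPolynomial (Fin 2) R) :=
  IsFractionRing.liftAlgHom aeval_shear_fractionRing_injective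

theorem planeShearHom_surjective : Function.Surjective (planeShearHom (R := R)) := by
  refine fractionRing_algHom_surjective fun i => ?_
  fin_cases i
  · exact ⟨𝐱, by simp [planeShearHom]⟩
  · exact ⟨𝐱⁻¹ * 𝐲, by simp [planeShearHom]⟩

noncomputable def planeShear :
    FractionRing (MvPolynomial (Fin 2) R) ≃ₐ[R] FractionRing (MvPolynomial (Fin 2) R) :=
  AlgEquiv.ofBijective planeShearHom
    ⟨planeShearHom.toRingHom.injective, planeShearHom_surjective⟩

theorem planeShear_apply_X0 : planeShear 𝐱 = 𝐱 := by
  simp [planeShear, planeShearHom]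

theorem planeShear_apply_X1 : planeShear 𝐲 = 𝐱 * 𝐲 := by
  simp [planeShear, planeShearHom]

theorem planeShear_zpow_apply_X0 (a : ℤ) : (planeShear ^ a) 𝐱 = 𝐱 :=
  planeShear.zpow_apply_of_apply_eq planeShear_apply_X0 a

theorem planeShear_zpow_apply_X1 (a : ℤ) : (planeShear ^ a) 𝐲 = 𝐱 ^ a * 𝐲 :=
  planeShear.zpow_apply_of_apply_eq_mul (R := R) (algebraMap_X_ne_zero 0) planeShear_apply_X0
    planeShear_apply_X1 a

end Shear

theorem diagonal_automorphisms_conjugate_general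
    (ε : ℂ) (a : ℤ)
    (g h : PlaneFunctionField ≃ₐ[ℂ] PlaneFunctionField)
    (hgx : g Xf = Cf ε * Xf) (hgy : g Yf = Cf (ε ^ a) * Yf)
    (hhx : h Xf = Cf ε * Xf) (hhy : h Yf = Yf) :
    ∃ σ : PlaneFunctionField ≃ₐ[ℂ] PlaneFunctionField, σ * g * σ⁻¹ = h := by
  set σ : PlaneFunctionField ≃ₐ[ℂ] PlaneFunctionField := planeShear ^ a
  have hσx : σ Xf = Xf := planeShear_zpow_apply_X0 a
  have hσy : σ Yf = Xf ^ a * Yf := planeShear_zpow_apply_X1 a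
  refine ⟨σ, mul_inv_eq_of_eq_mul <| AlgEquiv.coe_toAlgHom_injective <|
    fractionRing_algHom_ext fun i => ?_⟩
  fin_cases i
  · change σ (g Xf) = h (σ Xf)
    rw [hgx, hσx, hhx, map_mul, hσx, Cf, σ.commutes]
  · change σ (g Yf) = h (σ Yf)
    rw [hgy, hσy, map_mul, hσy, map_mul, map_zpow₀, hhx, hhy, mul_zpow]
    simp only [Cf, map_zpow₀, σ.commutes]
    ring

/-- Let `ε` be a primitive `n`-th root of unity and `a ∈ ℤ`. The diagonal linear
automorphisms `g : (x, y) ↦ (εx, εᵃy)` and `h : (x, y) ↦ (εx, y)` are conjugate in the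
Cremona group; consequently all diagonal linear automorphisms of the plane of order `n`
generate conjugate cyclic subgroups of `Cr(2)`. -/
theorem diagonal_automorphisms_conjugate
    (n : ℕ) (hn : 1 ≤ n) (ε : ℂ) (hε : IsPrimitiveRoot ε n) (a : ℤ)
    (g h : PlaneFunctionField ≃ₐ[ℂ] PlaneFunctionField)
    (hgx : g Xf = Cf ε * Xf) (hgy : g Yf = Cf (ε ^ a) * Yf)
    (hhx : h Xf = Cf ε * Xf) (hhy : h Yf = Yf) :
    ∃ σ : PlaneFunctionField ≃ₐ[ℂ] PlaneFunctionField, σ * g * σ⁻¹ = h :=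
  diagonal_automorphisms_conjugate_general ε a g h hgx hgy hhx hhy
end
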